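/- Let N be a positive integer and for each prime p let e_p(N) be the exponent of p in the prime factorization of N. Then the finite adele ring 𝔸_f decomposes as the disjoint union over α ∈ ℚ/Nℤ of the cosets α + K_N, where K_N = ∏_p p^{e_p(N)}ℤ_p. Precisely: for every x ∈ 𝔸_f there exists α ∈ ℚ such that |x_p − α|_p ≤ p^{−e_p(N)} for every prime p, and if α, α′ ∈ ℚ both have this property then (α − α′)/N ∈ ℤ. -/

import Mathlib

/-! Every `z ∈ ℚ_p` differs by a `p`-adic integer from some `a / p ^ n` with `a n : ℕ`, a rational
that is integral at every other prime. Summing these principal parts over the finitely many primes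
at which an adele `y` is non-integral gives `β ∈ ℚ` with `y - β ∈ ∏ ℤ_p`; applied to `y = x / N`
this yields `α = N β`. Two admissible `α` differ, by the ultrametric inequality, by a rational
whose quotient by `N` is integral at every prime, hence an integer. -/

instance (p : Nat.Primes) : Fact (p : ℕ).Prime := ⟨p.2⟩

/-- The finite adele ring `𝔸_f` of `ℚ`, modelled concretely as the restricted product of the
fields `ℚ_p` with respect to the subrings `ℤ_p`: families `(x_p)_p` with `‖x_p‖_p ≤ 1` for
all but finitely many primes `p`. -/
def FiniteAdele : Type :=
  {x : (p : Nat.Primes) → ℚ_[(p : ℕ)] // ∀ᶠ p in Filter.cofinite, ‖x p‖ ≤ 1}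

open Filter

namespace Padic

variable {p : ℕ} [hp : Fact p.Prime]

theorem norm_natCast_eq_zpow_neg_factorization {N : ℕ} (hN : N ≠ 0) :
    ‖(N : ℚ_[p])‖ = (p : ℝ) ^ (-(N.factorization p : ℤ)) := by
  rw [norm_eq_zpow_neg_valuation (by exact_mod_cast hN), valuation_natCast,
    Nat.factorization_def N hp.out]

theorem norm_ratCast_div_pow_le_one_of_coprime {m : ℕ} (hm : p.Coprime m) (a n : ℕ) :
    ‖((a / m ^ n : ℚ) : ℚ_[p])‖ ≤ 1 := by
  have hm_norm : ‖(m : ℚ_[p])‖ = 1 := norm_natCast_eq_one_iff.2 hm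
  push_cast
  rw [norm_div, norm_pow, hm_norm, one_pow, div_one]
  exact_mod_cast norm_int_le_one (a : ℤ)

theorem exists_nat_norm_sub_div_pow_le_one (z : ℚ_[p]) :
    ∃ a n : ℕ, ‖z - a / (p : ℚ_[p]) ^ n‖ ≤ 1 := by
  obtain ⟨n, hn⟩ := pow_unbounded_of_one_lt ‖z‖ (by exact_mod_cast hp.out.one_lt : (1 : ℝ) < p)
  have hp_ne : (p : ℝ) ≠ 0 := by exact_mod_cast hp.out.ne_zero
  have hp_pow_ne : (p : ℚ_[p]) ^ n ≠ 0 := pow_ne_zero _ (by exact_mod_cast hp.out.ne_zero)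
  have hp_pow_norm : ‖(p : ℚ_[p]) ^ n‖ = ((p : ℝ) ^ n)⁻¹ := by
    rw [norm_p_pow, zpow_neg, zpow_natCast]
  -- Clearing the denominator `p ^ n` of `z` lands in `ℤ_[p]`, where `ℕ` is dense.
  let w : ℤ_[p] := ⟨p ^ n * z, by
    rw [norm_mul, hp_pow_norm]; exact inv_mul_le_one_of_le₀ hn.le (by positivity)⟩
  have hw : ‖w - w.appr n‖ ≤ (p : ℝ) ^ (-n : ℤ) :=
    (PadicInt.norm_le_pow_iff_mem_span_pow _ n).2 (w.appr_spec n)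
  refine ⟨w.appr n, n, ?_⟩
  have hz : z - w.appr n / (p : ℚ_[p]) ^ n =
      ((w - w.appr n : ℤ_[p]) : ℚ_[p]) / (p : ℚ_[p]) ^ n := by
    rw [PadicInt.coe_sub, PadicInt.coe_natCast, eq_div_iff hp_pow_ne, sub_mul,
      div_mul_cancel₀ _ hp_pow_ne, mul_comm]
  rw [hz, norm_div, hp_pow_norm, ← PadicInt.norm_def, div_inv_eq_mul]
  calc ‖w - w.appr n‖ * (p : ℝ) ^ n ≤ (p : ℝ) ^ (-n : ℤ) * (p : ℝ) ^ n := by gcongr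
    _ = 1 := by rw [zpow_neg, zpow_natCast, inv_mul_cancel₀ (pow_ne_zero _ hp_ne)]

end Padic

theorem Rat.den_eq_one_of_forall_norm_padic_le_one {q : ℚ}
    (hq : ∀ p : Nat.Primes, ‖(q : ℚ_[p])‖ ≤ 1) : q.den = 1 := by
  by_contra hden
  obtain ⟨p, hp, hp_den⟩ := Nat.exists_prime_and_dvd hden
  -- `p ∣ q.den`, so `‖q.num‖_p = ‖q‖_p ‖q.den‖_p < 1` forces `p ∣ q.num` as well.
  have hp_num : (p : ℤ) ∣ q.num := by
    have : Fact p.Prime := ⟨hp⟩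
    rw [← Padic.norm_intCast_lt_one_iff]
    calc ‖(q.num : ℚ_[p])‖ = ‖(q : ℚ_[p])‖ * ‖(q.den : ℚ_[p])‖ := by
          rw [← norm_mul]; congr 1; exact_mod_cast (Rat.mul_den_eq_num q).symm
      _ < 1 := mul_lt_one_of_nonneg_of_lt_one_right (hq ⟨p, hp⟩) (norm_nonneg _)
          (Padic.norm_natCast_lt_one_iff.2 hp_den)
  exact hp.one_lt.ne' (Nat.dvd_one.1 (q.reduced ▸ Nat.dvd_gcd (Int.natCast_dvd.1 hp_num) hp_den))

theorem exists_rat_forall_norm_sub_le_one (y : ∀ p : Nat.Primes, ℚ_[p])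
    (hy : ∀ᶠ p in cofinite, ‖y p‖ ≤ 1) : ∃ β : ℚ, ∀ p : Nat.Primes, ‖y p - β‖ ≤ 1 := by
  choose a n hr_near using fun p : Nat.Primes => Padic.exists_nat_norm_sub_div_pow_le_one (y p)
  let r (p : Nat.Primes) : ℚ := a p / (p : ℕ) ^ n p
  -- `PadicInt.subring q` is `{v | ‖v‖ ≤ 1}`, so integrality is closed under sums and differences.
  have hr_int (p q : Nat.Primes) (hpq : p ≠ q) : ((r p : ℚ) : ℚ_[q]) ∈ PadicInt.subring q :=
    Padic.norm_ratCast_div_pow_le_one_of_coprime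
      ((Nat.coprime_primes q.2 p.2).2 (Subtype.coe_injective.ne hpq.symm)) _ _
  let S := (eventually_cofinite.1 hy).toFinset
  have hsum (q : Nat.Primes) (T : Finset Nat.Primes) (hqT : q ∉ T) :
      ((∑ p ∈ T, r p : ℚ) : ℚ_[q]) ∈ PadicInt.subring q := by
    push_cast
    exact sum_mem fun p hp => hr_int p q (ne_of_mem_of_not_mem hp hqT)
  refine ⟨∑ p ∈ S, r p, fun q => ?_⟩
  change _ ∈ PadicInt.subring q
  by_cases hq : q ∈ S
  · rw [← Finset.add_sum_erase S r hq, Rat.cast_add, ← sub_sub]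
    refine sub_mem ?_ (hsum q _ (Finset.notMem_erase q S))
    simpa [r] using hr_near q
  · exact sub_mem (by simpa [S] using hq) (hsum q S hq)

theorem Rat.exists_eq_intCast_mul_of_forall_norm_padic_le {N : ℕ} (hN : N ≠ 0) {q : ℚ}
    (hq : ∀ p : Nat.Primes, ‖(q : ℚ_[p])‖ ≤ ‖(N : ℚ_[p])‖) : ∃ k : ℤ, q = k * N := by
  have hden : (q / N).den = 1 := Rat.den_eq_one_of_forall_norm_padic_le_one fun p => by
    rw [Rat.cast_div, norm_div, Rat.cast_natCast]
    exact div_le_one_of_le₀ (hq p) (norm_nonneg _)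
  refine ⟨(q / N).num, ?_⟩
  rw [Rat.coe_int_num_of_den_eq_one hden, div_mul_cancel₀ _ (by exact_mod_cast hN)]

theorem eventually_norm_natCast_eq_one {N : ℕ} (hN : N ≠ 0) :
    ∀ᶠ p : Nat.Primes in cofinite, ‖(N : ℚ_[p])‖ = 1 := by
  refine eventually_cofinite.2 (((Set.finite_Iic N).preimage Subtype.coe_injective.injOn).subset
    fun (p : Nat.Primes) hp => Nat.le_of_dvd (Nat.pos_of_ne_zero hN) ?_)
  by_contra hp_dvd
  exact hp (Padic.norm_natCast_eq_one_iff.2 ((Nat.Prime.coprime_iff_not_dvd p.2).2 hp_dvd))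

theorem FiniteAdele.exists_rat_forall_norm_sub_le_norm_natCast (x : FiniteAdele) {N : ℕ}
    (hN : N ≠ 0) : ∃ α : ℚ, ∀ p : Nat.Primes, ‖x.1 p - α‖ ≤ ‖(N : ℚ_[p])‖ := by
  have hN_ne (p : Nat.Primes) : (N : ℚ_[p]) ≠ 0 := by exact_mod_cast hN
  obtain ⟨β, hβ⟩ := exists_rat_forall_norm_sub_le_one (fun p => x.1 p / N) <| by
    filter_upwards [x.2, eventually_norm_natCast_eq_one hN] with p hx hN_norm
    rwa [norm_div, hN_norm, div_one]
  refine ⟨N * β, fun p => ?_⟩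
  calc ‖x.1 p - ((N * β : ℚ) : ℚ_[p])‖ = ‖(N : ℚ_[p])‖ * ‖x.1 p / N - β‖ := by
        rw [← norm_mul, mul_sub, mul_div_cancel₀ _ (hN_ne p)]; push_cast; rfl
    _ ≤ ‖(N : ℚ_[p])‖ := mul_le_of_le_one_right (norm_nonneg _) (hβ p)

theorem finiteAdele_coset_decomposition (N : ℕ) (hN : 0 < N) :
    (∀ x : FiniteAdele, ∃ α : ℚ, ∀ p : Nat.Primes,
        ‖x.1 p - ((α : ℚ) : ℚ_[(p : ℕ)])‖ ≤ ((p : ℕ) : ℝ) ^ (-(N.factorization (p : ℕ) : ℤ))) ∧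
    ∀ (x : FiniteAdele) (α α' : ℚ),
      (∀ p : Nat.Primes,
        ‖x.1 p - ((α : ℚ) : ℚ_[(p : ℕ)])‖ ≤ ((p : ℕ) : ℝ) ^ (-(N.factorization (p : ℕ) : ℤ))) →
      (∀ p : Nat.Primes,
        ‖x.1 p - ((α' : ℚ) : ℚ_[(p : ℕ)])‖ ≤ ((p : ℕ) : ℝ) ^ (-(N.factorization (p : ℕ) : ℤ))) →
      ∃ k : ℤ, α - α' = (k : ℚ) * (N : ℚ) := by
  have hN0 : N ≠ 0 := hN.ne'
  simp only [← Padic.norm_natCast_eq_zpow_neg_factorization hN0]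
  refine ⟨fun x => x.exists_rat_forall_norm_sub_le_norm_natCast hN0, fun x α α' h h' => ?_⟩
  refine Rat.exists_eq_intCast_mul_of_forall_norm_padic_le hN0 fun p => ?_
  calc ‖((α - α' : ℚ) : ℚ_[p])‖ = ‖((α : ℚ_[p]) - x.1 p) + (x.1 p - α')‖ := by
        rw [sub_add_sub_cancel, Rat.cast_sub]
    _ ≤ max ‖(α : ℚ_[p]) - x.1 p‖ ‖x.1 p - α'‖ := IsUltrametricDist.norm_add_le_max _ _
    _ ≤ ‖(N : ℚ_[p])‖ := max_le (norm_sub_rev (x.1 p) _ ▸ h p) (h' p)
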